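/- Let P be a finite poset, let T ⊆ H_P be a line connected subgraph that is a tree, let P_T be the sub-poset generated by T, and let M be a kP-module whose gradient vanishes on T (i.e. there is a natural isomorphism β*(M_T) ≅ φ*(M_T)). Then: (a) for any two covering relations u ⋖ v and u ⋖ v′ of P_T with the same source, ker M(u ≤ v) = ker M(u ≤ v′) as subspaces of M(u), and for any two covering relations w ⋖ u and w′ ⋖ u of P_T with the same target, im M(w ≤ u) = im M(w′ ≤ u) as subspaces of M(u); (b) for any two covering relations u ⋖ v and s ⋖ t of P_T, ker M(u ≤ v) ≅ ker M(s ≤ t) and im M(u ≤ v) ≅ im M(s ≤ t) as k-vector spaces. -/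

import Mathlib

/-!
For consecutive edges `e = (x, y)` and `f = (y, z)` of `T`, the vanishing gradient gives a
commuting square `α f ∘ M(x ≤ y) = M(y ≤ z) ∘ α e` whose vertical sides are isomorphisms, so
`α e` carries `ker M(x ≤ y)` onto `ker M(y ≤ z)` and `α f` carries `im M(x ≤ y)` onto
`im M(y ≤ z)`. Line connectedness propagates these isomorphisms to any two edges, which gives (b),
since every covering relation of `P_T` is an edge of `T`.

For (a), if two distinct edges of `T` leave `u`, some edge `g = (w, u)` enters `u`: otherwise
line-graph adjacency never passes through `u`, so a line-graph path between the two edges would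
join their heads in `T` minus `u`, and the tree would contain a cycle. The square at `g` then
identifies both kernels at `u` with `α g (ker M(w ≤ u))`. Dually, two edges entering `u` force an
edge `(u, x)`, and both images at `u` are the preimage under `α (u, x)` of `im M(u ≤ x)`.
-/

/-- A `kP`-module: a functor from the poset `P` to finite dimensional
`k`-vector spaces, given by concrete data. -/
structure PModule (k : Type) (P : Type) [Field k] [Preorder P] where
  V : P → Type
  [acg : ∀ x, AddCommGroup (V x)]
  [mod : ∀ x, Module k (V x)]
  [fd : ∀ x, FiniteDimensional k (V x)]
  map : ∀ {x y : P}, x ≤ y → (V x →ₗ[k] V y)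
  map_id : ∀ x : P, map (le_refl x) = LinearMap.id
  map_comp : ∀ {x y z : P} (h₁ : x ≤ y) (h₂ : y ≤ z), map (h₁.trans h₂) = (map h₂).comp (map h₁)

attribute [instance] PModule.acg PModule.mod PModule.fd

/-- The order relation of the sub-poset `P_T` generated by the edge set `Te` on the
vertex set `Tv`: the reflexive-transitive closure of the edge relation of `T`. -/
def ptle {P : Type} [PartialOrder P] (Tv : Set P) (Te : Set (P × P)) (a b : ↥Tv) : Prop :=
  Relation.ReflTransGen (fun x y : ↥Tv => ((x : P), (y : P)) ∈ Te) a b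

/-- The strict order relation of the sub-poset `P_T`. -/
def ptlt {P : Type} [PartialOrder P] (Tv : Set P) (Te : Set (P × P)) (a b : ↥Tv) : Prop :=
  ptle Tv Te a b ∧ ¬ ptle Tv Te b a

/-- The covering relation of the sub-poset `P_T`. -/
def ptcov {P : Type} [PartialOrder P] (Tv : Set P) (Te : Set (P × P)) (a b : ↥Tv) : Prop :=
  ptlt Tv Te a b ∧ ∀ c : ↥Tv, ptlt Tv Te a c → ¬ ptlt Tv Te c b

/-- The order relation of the line poset of `P_T`, whose elements are the edges of `T`:
`e ≤ f` iff there is a chain of consecutive edges from `e` to `f`. -/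
def tline {P : Type} [PartialOrder P] (Te : Set (P × P)) (e f : ↥Te) : Prop :=
  Relation.ReflTransGen (fun a b : ↥Te => (a : P × P).2 = (b : P × P).1) e f

theorem SimpleGraph.Reachable.rel_of_adj {V : Type*} {G : SimpleGraph V} {r : V → V → Prop}
    (hr : Equivalence r) (hadj : ∀ u v, G.Adj u v → r u v) {u v : V} (h : G.Reachable u v) :
    r u v :=
  Relation.reflTransGen_le_of_equivalence_of_le hr hadj _ _
    ((G.reachable_iff_reflTransGen u v).mp h)

section OrientedTree

variable {V E : Type*} {G : SimpleGraph V} {L : SimpleGraph E} {s t : E → V}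

theorem exists_tgt_eq_of_src_eq (hG : G.IsAcyclic) (hadj : ∀ e, G.Adj (s e) (t e))
    (hinj : ∀ e f, s e = s f → t e = t f → e = f) (hL : L.Preconnected)
    (hLadj : ∀ e f, L.Adj e f → t e = s f ∨ t f = s e) {e f : E} (hef : e ≠ f)
    (hs : s e = s f) : ∃ g, t g = s e := by
  by_contra! hin
  set G' := G.deleteEdges {s(s e, t e)}
  have hbridge : ¬ G'.Reachable (s e) (t e) :=
    SimpleGraph.isBridge_iff.mp (SimpleGraph.isAcyclic_iff_forall_adj_isBridge.mp hG (hadj e))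
  let c := G'.connectedComponentMk
  have hside : ∀ d ≠ e, c (s d) = c (t d) := by
    intro d hne
    refine SimpleGraph.ConnectedComponent.connectedComponentMk_eq_of_adj
      (SimpleGraph.deleteEdges_adj.mpr ⟨hadj d, fun hh => ?_⟩)
    rcases Sym2.eq_iff.mp (Set.mem_singleton_iff.mp hh) with ⟨hs', ht'⟩ | ⟨-, hts⟩
    · exact hne (hinj d e hs' ht')
    · exact hin d hts
  -- the edges whose target lies on the `t e` side of the bridge `e` form a line-closed set
  have hclosed : ∀ d d', L.Adj d d' → c (t d) = c (t e) → c (t d') = c (t e) := by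
    intro d d' hA hS
    rcases hLadj d d' hA with hdd' | hd'd
    · rcases eq_or_ne d' e with rfl | hne
      · rfl
      · rw [← hside d' hne, ← hdd', hS]
    · rw [hd'd, hside d (by rintro rfl; exact hin d' hd'd), hS]
  have hf : c (t f) = c (t e) :=
    ((hL e f).rel_of_adj (r := fun a b => c (t a) = c (t e) ↔ c (t b) = c (t e))
      ⟨fun _ => .rfl, Iff.symm, Iff.trans⟩
      (fun a b hab => ⟨hclosed a b hab, hclosed b a hab.symm⟩)).mp rfl
  refine hbridge (SimpleGraph.ConnectedComponent.exact ?_)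
  change c (s e) = c (t e)
  rw [hs, hside f hef.symm, hf]

theorem exists_src_eq_of_tgt_eq (hG : G.IsAcyclic) (hadj : ∀ e, G.Adj (s e) (t e))
    (hinj : ∀ e f, s e = s f → t e = t f → e = f) (hL : L.Preconnected)
    (hLadj : ∀ e f, L.Adj e f → t e = s f ∨ t f = s e) {e f : E} (hef : e ≠ f)
    (ht : t e = t f) : ∃ g, s g = t e :=
  exists_tgt_eq_of_src_eq (s := t) (t := s) hG (fun e => (hadj e).symm)
    (fun e f hs ht => hinj e f ht hs) hL (fun e f h => (hLadj e f h).symm.imp Eq.symm Eq.symm)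
    hef ht

end OrientedTree

section LineConnectedTree

variable {V : Type*} {Tv : Set V} {Te : Set (V × V)}

theorem fromRel_adj_of_mem (hTe : ∀ e ∈ Te, e.1 ≠ e.2 ∧ e.1 ∈ Tv ∧ e.2 ∈ Tv) (e : ↥Te) :
    (SimpleGraph.fromRel fun a b : ↥Tv => ((a : V), (b : V)) ∈ Te).Adj
      ⟨(e : V × V).1, (hTe _ e.2).2.1⟩ ⟨(e : V × V).2, (hTe _ e.2).2.2⟩ :=
  (SimpleGraph.fromRel_adj _ _ _).mpr ⟨fun h => (hTe _ e.2).1 (congrArg Subtype.val h), Or.inl e.2⟩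

theorem eq_or_eq_of_lineGraph_adj {e f : ↥Te}
    (h : (SimpleGraph.fromRel fun e f : ↥Te => (e : V × V).2 = (f : V × V).1).Adj e f) :
    (e : V × V).2 = (f : V × V).1 ∨ (f : V × V).2 = (e : V × V).1 :=
  ((SimpleGraph.fromRel_adj _ _ _).mp h).2

theorem exists_in_edge_of_ne_out_edges (hTe : ∀ e ∈ Te, e.1 ≠ e.2 ∧ e.1 ∈ Tv ∧ e.2 ∈ Tv)
    (htree : (SimpleGraph.fromRel fun a b : ↥Tv => ((a : V), (b : V)) ∈ Te).IsAcyclic)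
    (hlc : (SimpleGraph.fromRel fun e f : ↥Te => (e : V × V).2 = (f : V × V).1).Preconnected)
    {u v v' : V} (hv : (u, v) ∈ Te) (hv' : (u, v') ∈ Te) (hne : v ≠ v') :
    ∃ w, (w, u) ∈ Te := by
  obtain ⟨⟨⟨w, u'⟩, hwu⟩, hu'⟩ := exists_tgt_eq_of_src_eq htree (fromRel_adj_of_mem hTe)
    (fun e f hs ht => Subtype.ext (Prod.ext (congrArg Subtype.val hs) (congrArg Subtype.val ht)))
    hlc (fun e f h => (eq_or_eq_of_lineGraph_adj h).imp Subtype.ext Subtype.ext)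
    (e := ⟨_, hv⟩) (f := ⟨_, hv'⟩) (fun h => hne (congrArg (fun e : ↥Te => (e : V × V).2) h)) rfl
  obtain rfl : u' = u := congrArg Subtype.val hu'
  exact ⟨w, hwu⟩

theorem exists_out_edge_of_ne_in_edges (hTe : ∀ e ∈ Te, e.1 ≠ e.2 ∧ e.1 ∈ Tv ∧ e.2 ∈ Tv)
    (htree : (SimpleGraph.fromRel fun a b : ↥Tv => ((a : V), (b : V)) ∈ Te).IsAcyclic)
    (hlc : (SimpleGraph.fromRel fun e f : ↥Te => (e : V × V).2 = (f : V × V).1).Preconnected)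
    {w w' u : V} (hw : (w, u) ∈ Te) (hw' : (w', u) ∈ Te) (hne : w ≠ w') :
    ∃ x, (u, x) ∈ Te := by
  obtain ⟨⟨⟨u', x⟩, hux⟩, hu'⟩ := exists_src_eq_of_tgt_eq htree (fromRel_adj_of_mem hTe)
    (fun e f hs ht => Subtype.ext (Prod.ext (congrArg Subtype.val hs) (congrArg Subtype.val ht)))
    hlc (fun e f h => (eq_or_eq_of_lineGraph_adj h).imp Subtype.ext Subtype.ext)
    (e := ⟨_, hw⟩) (f := ⟨_, hw'⟩) (fun h => hne (congrArg (fun e : ↥Te => (e : V × V).1) h)) rfl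
  obtain rfl : u' = u := congrArg Subtype.val hu'
  exact ⟨x, hux⟩

theorem rel_of_lineGraph_preconnected {r : ↥Te → ↥Te → Prop} (hr : Equivalence r)
    (hlc : (SimpleGraph.fromRel fun e f : ↥Te => (e : V × V).2 = (f : V × V).1).Preconnected)
    (hcons : ∀ e f : ↥Te, (e : V × V).2 = (f : V × V).1 → r e f) (e f : ↥Te) : r e f :=
  (hlc e f).rel_of_adj hr fun e f h =>
    (eq_or_eq_of_lineGraph_adj h).elim (hcons e f) fun h => hr.symm (hcons f e h)

end LineConnectedTree

section CommSquare

variable {R M₁ M₂ N₁ N₂ : Type*} [Semiring R] [AddCommMonoid M₁] [AddCommMonoid M₂]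
  [AddCommMonoid N₁] [AddCommMonoid N₂] [Module R M₁] [Module R M₂] [Module R N₁] [Module R N₂]
  {a : M₁ ≃ₗ[R] N₁} {b : M₂ ≃ₗ[R] N₂} {f : M₁ →ₗ[R] M₂} {g : N₁ →ₗ[R] N₂}

theorem LinearMap.ker_eq_comap_of_comp_eq (h : b.toLinearMap ∘ₗ f = g ∘ₗ a.toLinearMap) :
    ker f = (ker g).comap a.toLinearMap := by
  rw [← ker_comp, ← h, LinearEquiv.ker_comp]

theorem LinearMap.range_eq_map_of_comp_eq (h : b.toLinearMap ∘ₗ f = g ∘ₗ a.toLinearMap) :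
    range g = (range f).map b.toLinearMap := by
  rw [← range_comp, h, LinearEquiv.range_comp]

theorem LinearMap.nonempty_ker_equiv_of_comp_eq (h : b.toLinearMap ∘ₗ f = g ∘ₗ a.toLinearMap) :
    Nonempty (ker f ≃ₗ[R] ker g) :=
  ⟨(LinearEquiv.ofEq _ _ (ker_eq_comap_of_comp_eq h)).trans (a.ofSubmodule' (ker g))⟩

theorem LinearMap.nonempty_range_equiv_of_comp_eq (h : b.toLinearMap ∘ₗ f = g ∘ₗ a.toLinearMap) :
    Nonempty (range f ≃ₗ[R] range g) :=
  ⟨b.ofSubmodules _ _ (range_eq_map_of_comp_eq h).symm⟩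

end CommSquare

theorem nonempty_linearEquiv_equivalence (R : Type*) [Semiring R] {ι : Type*} (X : ι → Type*)
    [∀ i, AddCommMonoid (X i)] [∀ i, Module R (X i)] :
    Equivalence fun i j => Nonempty (X i ≃ₗ[R] X j) :=
  ⟨fun _ => ⟨.refl R _⟩, fun ⟨e⟩ => ⟨e.symm⟩, fun ⟨e⟩ ⟨e'⟩ => ⟨e.trans e'⟩⟩

section SubPoset

variable {P : Type} [PartialOrder P] {Tv : Set P} {Te : Set (P × P)}

theorem le_of_ptle (hTe : ∀ e ∈ Te, e.1 ⋖ e.2 ∧ e.1 ∈ Tv ∧ e.2 ∈ Tv) {a b : ↥Tv}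
    (h : ptle Tv Te a b) : (a : P) ≤ b := by
  induction h with
  | refl => exact le_rfl
  | tail _ hbc ih => exact ih.trans (hTe _ hbc).1.le

theorem mem_of_ptcov (hTe : ∀ e ∈ Te, e.1 ⋖ e.2 ∧ e.1 ∈ Tv ∧ e.2 ∈ Tv) {u v : ↥Tv}
    (h : ptcov Tv Te u v) : ((u : P), (v : P)) ∈ Te := by
  obtain ⟨⟨huv, hvu⟩, hcov⟩ := h
  rcases Relation.ReflTransGen.cases_head huv with rfl | ⟨x, hux, hxv⟩
  · exact absurd .refl hvu
  obtain rfl | hxv' := eq_or_ne x v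
  · exact hux
  have hux' : ptlt Tv Te u x :=
    ⟨.single hux, fun hxu => (hTe _ hux).1.lt.not_ge (le_of_ptle hTe hxu)⟩
  have hxv'' : ptlt Tv Te x v :=
    ⟨hxv, fun hvx => hxv' (Subtype.ext ((le_of_ptle hTe hxv).antisymm (le_of_ptle hTe hvx)))⟩
  exact absurd hxv'' (hcov x hux')

end SubPoset

section Gradient

variable {k : Type} [Field k] {P : Type} [PartialOrder P] {Tv : Set P} {Te : Set (P × P)}
  {M : PModule k P} {α : ∀ e : ↥Te, M.V (e : P × P).1 ≃ₗ[k] M.V (e : P × P).2}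

variable (M α) in
def NaturalOnConsecutiveEdges : Prop :=
  ∀ e f : ↥Te, (e : P × P).2 = (f : P × P).1 →
    ∀ (h₁ : (e : P × P).1 ≤ (f : P × P).1) (h₂ : (e : P × P).2 ≤ (f : P × P).2),
      (α f).toLinearMap ∘ₗ M.map h₁ = M.map h₂ ∘ₗ (α e).toLinearMap

theorem NaturalOnConsecutiveEdges.square (hα : NaturalOnConsecutiveEdges M α) {x y z : P}
    (hxy : (x, y) ∈ Te) (hyz : (y, z) ∈ Te) (h₁ : x ≤ y) (h₂ : y ≤ z) :
    (α ⟨_, hyz⟩).toLinearMap ∘ₗ M.map h₁ = M.map h₂ ∘ₗ (α ⟨_, hxy⟩).toLinearMap :=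
  hα ⟨_, hxy⟩ ⟨_, hyz⟩ rfl h₁ h₂

theorem ker_eq_ker_of_out_edges (hTe : ∀ e ∈ Te, e.1 < e.2 ∧ e.1 ∈ Tv ∧ e.2 ∈ Tv)
    (htree : (SimpleGraph.fromRel fun a b : ↥Tv => ((a : P), (b : P)) ∈ Te).IsAcyclic)
    (hlc : (SimpleGraph.fromRel fun e f : ↥Te => (e : P × P).2 = (f : P × P).1).Preconnected)
    (hα : NaturalOnConsecutiveEdges M α) {u v v' : P} (hv : (u, v) ∈ Te) (hv' : (u, v') ∈ Te)
    (h : u ≤ v) (h' : u ≤ v') : LinearMap.ker (M.map h) = LinearMap.ker (M.map h') := by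
  obtain rfl | hvv' := eq_or_ne v v'
  · rfl
  obtain ⟨w, hwu⟩ := exists_in_edge_of_ne_out_edges
    (fun e he => ⟨(hTe e he).1.ne, (hTe e he).2⟩) htree hlc hv hv' hvv'
  have hwu' := (hTe _ hwu).1.le
  apply Submodule.comap_injective_of_surjective (α ⟨_, hwu⟩).surjective
  rw [← LinearMap.ker_eq_comap_of_comp_eq (hα.square hwu hv hwu' h),
    ← LinearMap.ker_eq_comap_of_comp_eq (hα.square hwu hv' hwu' h')]

theorem range_eq_range_of_in_edges (hTe : ∀ e ∈ Te, e.1 < e.2 ∧ e.1 ∈ Tv ∧ e.2 ∈ Tv)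
    (htree : (SimpleGraph.fromRel fun a b : ↥Tv => ((a : P), (b : P)) ∈ Te).IsAcyclic)
    (hlc : (SimpleGraph.fromRel fun e f : ↥Te => (e : P × P).2 = (f : P × P).1).Preconnected)
    (hα : NaturalOnConsecutiveEdges M α) {w w' u : P} (hw : (w, u) ∈ Te) (hw' : (w', u) ∈ Te)
    (h : w ≤ u) (h' : w' ≤ u) : LinearMap.range (M.map h) = LinearMap.range (M.map h') := by
  obtain rfl | hww' := eq_or_ne w w'
  · rfl
  obtain ⟨x, hux⟩ := exists_out_edge_of_ne_in_edges
    (fun e he => ⟨(hTe e he).1.ne, (hTe e he).2⟩) htree hlc hw hw' hww'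
  have hux' := (hTe _ hux).1.le
  apply Submodule.map_injective_of_injective (α ⟨_, hux⟩).injective
  rw [← LinearMap.range_eq_map_of_comp_eq (hα.square hw hux h hux'),
    ← LinearMap.range_eq_map_of_comp_eq (hα.square hw' hux h' hux')]

theorem nonempty_ker_equiv_and_range_equiv_of_mem (hle : ∀ e ∈ Te, e.1 ≤ e.2)
    (hlc : (SimpleGraph.fromRel fun e f : ↥Te => (e : P × P).2 = (f : P × P).1).Preconnected)
    (hα : NaturalOnConsecutiveEdges M α) {u v s t : P} (huv : (u, v) ∈ Te) (hst : (s, t) ∈ Te)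
    (h : u ≤ v) (h' : s ≤ t) :
    Nonempty (LinearMap.ker (M.map h) ≃ₗ[k] LinearMap.ker (M.map h')) ∧
      Nonempty (LinearMap.range (M.map h) ≃ₗ[k] LinearMap.range (M.map h')) := by
  let edgeMap (e : ↥Te) := M.map (hle _ e.2)
  have hconsec : ∀ e f : ↥Te, (e : P × P).2 = (f : P × P).1 →
      Nonempty (LinearMap.ker (edgeMap e) ≃ₗ[k] LinearMap.ker (edgeMap f)) ∧
        Nonempty (LinearMap.range (edgeMap e) ≃ₗ[k] LinearMap.range (edgeMap f)) := by
    rintro ⟨⟨x, y⟩, hxy⟩ ⟨⟨y', z⟩, hyz⟩ (rfl : y = y')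
    have hsq := hα.square hxy hyz (hle _ hxy) (hle _ hyz)
    exact ⟨LinearMap.nonempty_ker_equiv_of_comp_eq hsq,
      LinearMap.nonempty_range_equiv_of_comp_eq hsq⟩
  exact ⟨rel_of_lineGraph_preconnected (nonempty_linearEquiv_equivalence k _) hlc
      (fun e f h => (hconsec e f h).1) ⟨_, huv⟩ ⟨_, hst⟩,
    rel_of_lineGraph_preconnected (nonempty_linearEquiv_equivalence k _) hlc
      (fun e f h => (hconsec e f h).2) ⟨_, huv⟩ ⟨_, hst⟩⟩

end Gradient

theorem statement10_general (k : Type) [Field k] (P : Type) [PartialOrder P]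
    (Tv : Set P) (Te : Set (P × P))
    -- `T` is a subgraph of the Hasse diagram `H_P`, with vertex set `Tv` and edge set `Te`
    (hTe : ∀ e ∈ Te, (e.1 ⋖ e.2) ∧ e.1 ∈ Tv ∧ e.2 ∈ Tv)
    -- `T` is a tree: its underlying undirected graph is connected and acyclic
    (htree : (SimpleGraph.fromRel (fun a b : ↥Tv => ((a : P), (b : P)) ∈ Te)).IsTree)
    -- `T` is line connected: the line digraph of `T` is connected as an undirected graph
    (hlc : (SimpleGraph.fromRel (fun e f : ↥Te => (e : P × P).2 = (f : P × P).1)).Connected)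
    (M : PModule k P)
    -- the gradient of `M` vanishes on `T`: a natural isomorphism `β*(M_T) ≅ φ*(M_T)`
    (hgrad : ∃ α : ∀ e : ↥Te, (M.V (e : P × P).1 ≃ₗ[k] M.V (e : P × P).2),
      ∀ (e f : ↥Te), tline Te e f →
        ∀ (h1 : (e : P × P).1 ≤ (f : P × P).1) (h2 : (e : P × P).2 ≤ (f : P × P).2),
          (α f).toLinearMap.comp (M.map h1) = (M.map h2).comp (α e).toLinearMap) :
    -- (a) kernels agree for covering relations with common source
    (∀ u v v' : ↥Tv, ptcov Tv Te u v → ptcov Tv Te u v' →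
      ∀ (h : (u : P) ≤ (v : P)) (h' : (u : P) ≤ (v' : P)),
        LinearMap.ker (M.map h) = LinearMap.ker (M.map h')) ∧
    -- (a) images agree for covering relations with common target
    (∀ w w' u : ↥Tv, ptcov Tv Te w u → ptcov Tv Te w' u →
      ∀ (h : (w : P) ≤ (u : P)) (h' : (w' : P) ≤ (u : P)),
        LinearMap.range (M.map h) = LinearMap.range (M.map h')) ∧
    -- (b) kernels and images on any two covering relations of `P_T` are isomorphic
    (∀ u v s t : ↥Tv, ptcov Tv Te u v → ptcov Tv Te s t →
      ∀ (h : (u : P) ≤ (v : P)) (h' : (s : P) ≤ (t : P)),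
        Nonempty (↥(LinearMap.ker (M.map h)) ≃ₗ[k] ↥(LinearMap.ker (M.map h'))) ∧
        Nonempty (↥(LinearMap.range (M.map h)) ≃ₗ[k] ↥(LinearMap.range (M.map h')))) := by
  obtain ⟨α, hα⟩ := hgrad
  have hnat : NaturalOnConsecutiveEdges M α := fun e f hef => hα e f (.single hef)
  have hlt : ∀ e ∈ Te, e.1 < e.2 ∧ e.1 ∈ Tv ∧ e.2 ∈ Tv :=
    fun e he => ⟨(hTe e he).1.lt, (hTe e he).2⟩
  exact ⟨fun u v v' hv hv' h h' => ker_eq_ker_of_out_edges hlt htree.isAcyclic hlc.preconnected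
      hnat (mem_of_ptcov hTe hv) (mem_of_ptcov hTe hv') h h',
    fun w w' u hw hw' h h' => range_eq_range_of_in_edges hlt htree.isAcyclic hlc.preconnected
      hnat (mem_of_ptcov hTe hw) (mem_of_ptcov hTe hw') h h',
    fun u v s t huv hst h h' => nonempty_ker_equiv_and_range_equiv_of_mem
      (fun e he => (hTe e he).1.le) hlc.preconnected hnat (mem_of_ptcov hTe huv)
      (mem_of_ptcov hTe hst) h h'⟩

theorem statement10 (k : Type) [Field k] (P : Type) [Fintype P] [PartialOrder P]
    (Tv : Set P) (Te : Set (P × P))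
    -- `T` is a subgraph of the Hasse diagram `H_P`, with vertex set `Tv` and edge set `Te`
    (hTe : ∀ e ∈ Te, (e.1 ⋖ e.2) ∧ e.1 ∈ Tv ∧ e.2 ∈ Tv)
    -- `T` is a tree: its underlying undirected graph is connected and acyclic
    (htree : (SimpleGraph.fromRel (fun a b : ↥Tv => ((a : P), (b : P)) ∈ Te)).IsTree)
    -- `T` is line connected: the line digraph of `T` is connected as an undirected graph
    (hlc : (SimpleGraph.fromRel (fun e f : ↥Te => (e : P × P).2 = (f : P × P).1)).Connected)
    (M : PModule k P)
    -- the gradient of `M` vanishes on `T`: a natural isomorphism `β*(M_T) ≅ φ*(M_T)`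
    (hgrad : ∃ α : ∀ e : ↥Te, (M.V (e : P × P).1 ≃ₗ[k] M.V (e : P × P).2),
      ∀ (e f : ↥Te), tline Te e f →
        ∀ (h1 : (e : P × P).1 ≤ (f : P × P).1) (h2 : (e : P × P).2 ≤ (f : P × P).2),
          (α f).toLinearMap.comp (M.map h1) = (M.map h2).comp (α e).toLinearMap) :
    -- (a) kernels agree for covering relations with common source
    (∀ u v v' : ↥Tv, ptcov Tv Te u v → ptcov Tv Te u v' →
      ∀ (h : (u : P) ≤ (v : P)) (h' : (u : P) ≤ (v' : P)),
        LinearMap.ker (M.map h) = LinearMap.ker (M.map h')) ∧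
    -- (a) images agree for covering relations with common target
    (∀ w w' u : ↥Tv, ptcov Tv Te w u → ptcov Tv Te w' u →
      ∀ (h : (w : P) ≤ (u : P)) (h' : (w' : P) ≤ (u : P)),
        LinearMap.range (M.map h) = LinearMap.range (M.map h')) ∧
    -- (b) kernels and images on any two covering relations of `P_T` are isomorphic
    (∀ u v s t : ↥Tv, ptcov Tv Te u v → ptcov Tv Te s t →
      ∀ (h : (u : P) ≤ (v : P)) (h' : (s : P) ≤ (t : P)),
        Nonempty (↥(LinearMap.ker (M.map h)) ≃ₗ[k] ↥(LinearMap.ker (M.map h'))) ∧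
        Nonempty (↥(LinearMap.range (M.map h)) ≃ₗ[k] ↥(LinearMap.range (M.map h')))) :=
  statement10_general k P Tv Te hTe htree hlc M hgrad
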